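/- Let m ≥ 1 and let R : ℝ → (Fin m → ℝ) be a differentiable solution of the radial Willmore system dR_i/dτ = (d-1)M₁/(2M₂) · R_i⁻¹·([(3-d)R_i⁻¹ + a₀][(d-1)R_i⁻¹ - a₀] - R_c⁻²), where R_c⁻² = (Σ_j [(3-d)R_j⁻¹ + a₀][(d-1)R_j⁻¹ - a₀] R_j^{d-3}) / (Σ_j R_j^{d-3}), with all R_i(τ) > 0. Then the total interfacial area Σ_{j=1}^m R_j(τ)^{d-1} is constant in τ. -/

import Mathlib

/-!
Each radius moves by `R_i⁻¹ (F_i - F̄)`, where `F̄ = R_c⁻²` is the mean of the `F_j` weighted by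
`R_j^{d-3}`. Differentiating `∑ R_j^{d-1}` brings down a factor `R_j^{d-2}`, so the rate of change
of the area is proportional to `∑ R_j^{d-3} (F_j - F̄)`, which vanishes because a weighted mean
has zero weighted deviation.
-/

open Real Finset

theorem Finset.sum_mul_sub_weightedMean {ι : Type*} (s : Finset ι) {w : ι → ℝ} (f : ι → ℝ)
    (hw : ∀ i ∈ s, 0 < w i) :
    ∑ i ∈ s, w i * (f i - (∑ j ∈ s, f j * w j) / ∑ j ∈ s, w j) = 0 := by
  rcases s.eq_empty_or_nonempty with rfl | hs
  · simp
  have hW : (∑ j ∈ s, w j) ≠ 0 := (sum_pos hw hs).ne'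
  calc ∑ i ∈ s, w i * (f i - (∑ j ∈ s, f j * w j) / ∑ j ∈ s, w j)
      _ = ∑ i ∈ s, f i * w i - (∑ j ∈ s, f j * w j) / (∑ j ∈ s, w j) * ∑ j ∈ s, w j := by
        rw [mul_sum, ← sum_sub_distrib]
        exact sum_congr rfl fun i _ => by ring
      _ = 0 := by rw [div_mul_cancel₀ _ hW, sub_self]

theorem hasDerivAt_sum_rpow_of_hasDerivAt_inv_mul {ι : Type*} [Fintype ι] {R : ℝ → ι → ℝ}
    {g : ι → ℝ} {τ c p : ℝ} (hpos : ∀ i, 0 < R τ i)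
    (hR : ∀ i, HasDerivAt (fun t => R t i) (c * (R τ i)⁻¹ * g i) τ) :
    HasDerivAt (fun t => ∑ i, R t i ^ p) (c * p * ∑ i, R τ i ^ (p - 2) * g i) τ := by
  have hpow (i : ι) : (R τ i)⁻¹ * R τ i ^ (p - 1) = R τ i ^ (p - 2) := by
    rw [← rpow_neg_one, ← rpow_add (hpos i)]
    ring_nf
  refine (HasDerivAt.fun_sum fun i _ => (hR i).rpow_const (Or.inl (hpos i).ne')).congr_deriv ?_
  rw [mul_sum]
  exact sum_congr rfl fun i _ => by rw [← hpow i]; ring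

theorem stmt_0_general (m d : ℕ)
    (M₁ M₂ a₀ : ℝ)
    (R : ℝ → Fin m → ℝ)
    (hpos : ∀ τ i, 0 < R τ i)
    (hODE : ∀ τ (i : Fin m),
      HasDerivAt (fun t => R t i)
        (((d : ℝ) - 1) * M₁ / (2 * M₂) * (R τ i)⁻¹ *
          ((((3 : ℝ) - d) * (R τ i)⁻¹ + a₀) * (((d : ℝ) - 1) * (R τ i)⁻¹ - a₀)
            - (∑ j, (((3 : ℝ) - d) * (R τ j)⁻¹ + a₀) * (((d : ℝ) - 1) * (R τ j)⁻¹ - a₀)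
                * (R τ j) ^ ((d : ℝ) - 3))
              / (∑ j, (R τ j) ^ ((d : ℝ) - 3)))) τ) :
    ∀ τ₁ τ₂ : ℝ, ∑ j, (R τ₁ j) ^ ((d : ℝ) - 1) = ∑ j, (R τ₂ j) ^ ((d : ℝ) - 1) := by
  have area_deriv (τ : ℝ) : HasDerivAt (fun t => ∑ j, R t j ^ ((d : ℝ) - 1)) 0 τ := by
    have h := hasDerivAt_sum_rpow_of_hasDerivAt_inv_mul (p := (d : ℝ) - 1) (hpos τ) (hODE τ)
    rwa [show (d : ℝ) - 1 - 2 = d - 3 by ring,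
      sum_mul_sub_weightedMean _ _ fun i _ => rpow_pos_of_pos (hpos τ i) _, mul_zero] at h
  exact is_const_of_deriv_eq_zero (fun τ => (area_deriv τ).differentiableAt)
    fun τ => (area_deriv τ).deriv

/-- The radial Willmore system conserves total interfacial area `∑ j, R j ^ (d-1)`. -/
theorem stmt_0 (m d : ℕ) (hm : 1 ≤ m) (hd : 2 ≤ d)
    (M₁ M₂ a₀ : ℝ) (hM₁ : 0 < M₁) (hM₂ : 0 < M₂)
    (R : ℝ → Fin m → ℝ)
    (hpos : ∀ τ i, 0 < R τ i)
    (hdiff : ∀ i : Fin m, Differentiable ℝ (fun t => R t i))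
    (hODE : ∀ τ (i : Fin m),
      HasDerivAt (fun t => R t i)
        (((d : ℝ) - 1) * M₁ / (2 * M₂) * (R τ i)⁻¹ *
          ((((3 : ℝ) - d) * (R τ i)⁻¹ + a₀) * (((d : ℝ) - 1) * (R τ i)⁻¹ - a₀)
            - (∑ j, (((3 : ℝ) - d) * (R τ j)⁻¹ + a₀) * (((d : ℝ) - 1) * (R τ j)⁻¹ - a₀)
                * (R τ j) ^ ((d : ℝ) - 3))
              / (∑ j, (R τ j) ^ ((d : ℝ) - 3)))) τ) :
    ∀ τ₁ τ₂ : ℝ, ∑ j, (R τ₁ j) ^ ((d : ℝ) - 1) = ∑ j, (R τ₂ j) ^ ((d : ℝ) - 1) :=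
  stmt_0_general m d M₁ M₂ a₀ R hpos hODE
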